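/- Let A be a vector space over a field K and α : A → A a linear map. The bracket [f,g] = f ∘ g − (−1)^{(m-1)(n-1)} g ∘ f on C^•_α(A,A), built from the α-twisted circle product, is a degree −1 graded Lie bracket: it is graded antisymmetric, [f,g] = −(−1)^{(m-1)(n-1)}[g,f], and satisfies the graded Jacobi identity [f,[g,h]] = [[f,g],h] + (−1)^{(m-1)(n-1)}[g,[f,h]] for f ∈ C^m_α(A,A), g ∈ C^n_α(A,A), h ∈ C^p_α(A,A). -/

import Mathlib

/-- The cochain on `ℕ`-indexed tuples induced by a multilinear map `Aᵐ → A`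
(an element of the Hochschild-type cochain space). -/
def toCochain {K A : Type*} [Field K] [AddCommGroup A] [Module K A] (m : ℕ)
    (f : MultilinearMap K (fun _ : Fin m => A) A) : (ℕ → A) → A :=
  fun a => f fun j => a j

/-- The `α`-twisted partial composition `f ∘ᵢ g`, where `n` is the arity of `g`
and `i` is the (1-indexed) insertion position:
`(f ∘ᵢ g)(a₁,…) = f(α^[n-1] a₁, …, α^[n-1] a_{i-1}, g(a_i,…,a_{i+n-1}), α^[n-1] a_{i+n}, …)`. -/
def pcomp {A : Type*} (α : A → A) (n : ℕ) (f g : (ℕ → A) → A) (i : ℕ) : (ℕ → A) → A :=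
  fun a => f fun j =>
    if j + 1 < i then α^[n - 1] (a j)
    else if j + 1 = i then g fun k => a (i - 1 + k)
    else α^[n - 1] (a (j + n - 1))

/-- The `α`-twisted circle product
`(f ∘ g)(a₁,…) = ∑_{i=1}^{m} (-1)^{(n-1)(i-1)} f(α^[n-1] a₁, …, g(a_i,…,a_{i+n-1}), …)`,
where `m` is the arity of `f` and `n` the arity of `g`. -/
def circ {A : Type*} [AddCommGroup A] (α : A → A) (m n : ℕ) (f g : (ℕ → A) → A) :
    (ℕ → A) → A :=
  fun a => ∑ i ∈ Finset.range m, ((-1 : ℤ) ^ ((n - 1) * i)) • pcomp α n f g (i + 1) a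

/-- The `α`-twisted cup product
`(f ∪ g)(a₁,…,a_{m+n}) = μ(f(α^[n-1] a₁,…,α^[n-1] a_m), g(α^[m-1] a_{m+1},…,α^[m-1] a_{m+n}))`. -/
def cup {A : Type*} (μ : A → A → A) (α : A → A) (m n : ℕ) (f g : (ℕ → A) → A) :
    (ℕ → A) → A :=
  fun a => μ (f fun j => α^[n - 1] (a j)) (g fun j => α^[m - 1] (a (m + j)))

/-- The Hochschild-type coboundary of a hom-associative algebra `(A, μ, α)`:
`(δ f)(a₁,…,a_{n+1}) = μ(α^[n-1] a₁, f(a₂,…,a_{n+1}))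
  + ∑_{i=1}^{n} (-1)^i f(α a₁,…, μ(a_i,a_{i+1}), …, α a_{n+1})
  + (-1)^{n+1} μ(f(a₁,…,a_n), α^[n-1] a_{n+1})`. -/
def hdelta {A : Type*} [AddCommGroup A] (μ : A → A → A) (α : A → A) (n : ℕ)
    (f : (ℕ → A) → A) : (ℕ → A) → A :=
  fun a =>
    μ (α^[n - 1] (a 0)) (f fun j => a (j + 1))
      + ∑ i ∈ Finset.range n, ((-1 : ℤ) ^ (i + 1)) •
          f (fun j => if j < i then α (a j)
            else if j = i then μ (a i) (a (i + 1)) else α (a (j + 1)))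
      + ((-1 : ℤ) ^ (n + 1)) • μ (f a) (α^[n - 1] (a n))

/-- The degree `-1` graded Lie bracket `[f,g] = f ∘ g - (-1)^{(m-1)(n-1)} g ∘ f`. -/
def brkt {A : Type*} [AddCommGroup A] (α : A → A) (m n : ℕ) (f g : (ℕ → A) → A) :
    (ℕ → A) → A :=
  fun a => circ α m n f g a - ((-1 : ℤ) ^ ((m - 1) * (n - 1))) • circ α n m g f a

/-- The dot product `f · g = (-1)^{mn} f ∪ g`. -/
def dotp {A : Type*} [AddCommGroup A] (μ : A → A → A) (α : A → A) (m n : ℕ)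
    (f g : (ℕ → A) → A) : (ℕ → A) → A :=
  fun a => ((-1 : ℤ) ^ (m * n)) • cup μ α m n f g a

/-!
The circle product is graded right pre-Lie: in the associator `(f ∘ g) ∘ h - f ∘ (g ∘ h)` the
terms of `(f ∘ g) ∘ h` that insert `h` into the block of `g` are exactly the terms of
`f ∘ (g ∘ h)` (multilinearity of `f` distributes it over the sum `g ∘ h`), so the associator is
the sum over pairs of distinct slots of `f` filled by `g` and `h`, which is graded symmetric in
`g` and `h`. The twists agree because `g` commutes with `α`: inserting `h` beside the block of
`g` twists the output of `g` by `α^[p-1]`, and equivariance moves this twist onto its inputs.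
Graded antisymmetry of the bracket is formal, and the graded Jacobi identity is a linear
combination of three instances of the pre-Lie symmetry.
-/

open Finset

section PcompArgs

variable {A : Type*}

def pcompArgs (α : A → A) (q : ℕ) (G : (ℕ → A) → A) (j : ℕ) (a : ℕ → A) : ℕ → A :=
  fun t => if t < j then α^[q - 1] (a t)
    else if t = j then G fun k => a (j + k)
    else α^[q - 1] (a (t + q - 1))

lemma pcomp_succ_apply (α : A → A) (q : ℕ) (F G : (ℕ → A) → A) (j : ℕ) (a : ℕ → A) :
    pcomp α q F G (j + 1) a = F (pcompArgs α q G j a) := by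
  simp only [pcomp, add_lt_add_iff_right, add_left_inj, Nat.add_sub_cancel]
  rfl

lemma circ_apply [AddCommGroup A] (α : A → A) (M q : ℕ) (F G : (ℕ → A) → A) (a : ℕ → A) :
    circ α M q F G a = ∑ j ∈ range M, ((-1 : ℤ) ^ ((q - 1) * j)) • F (pcompArgs α q G j a) := by
  simp only [circ, pcomp_succ_apply]

def pcompArgs₂ (α : A → A) (n p : ℕ) (G H : (ℕ → A) → A) (u v : ℕ) (a : ℕ → A) : ℕ → A :=
  fun t =>
    if t < u then α^[n - 1 + (p - 1)] (a t)
    else if t = u then α^[p - 1] (G fun k => a (u + k))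
    else if t < v then α^[n - 1 + (p - 1)] (a (t + (n - 1)))
    else if t = v then α^[n - 1] (H fun k => a (v + (n - 1) + k))
    else α^[n - 1 + (p - 1)] (a (t + (n - 1) + (p - 1)))

lemma iterate_map_of_equivariant {B : Type*} {α : A → A} {G : (B → A) → A}
    (hG : ∀ v, α (G v) = G fun t => α (v t)) (k : ℕ) (v : B → A) :
    α^[k] (G v) = G fun t => α^[k] (v t) := by
  induction k generalizing v with
  | zero => rfl
  | succ k ih => simp only [Function.iterate_succ_apply, hG, ih]

lemma iterate_iterate_apply_of_add_eq (α : A → A) (a : ℕ → A) {k l k' i i' : ℕ} (hk : k + l = k')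
    (hi : i = i') : α^[k] (α^[l] (a i)) = α^[k'] (a i') := by
  rw [← Function.iterate_add_apply, hk, hi]

lemma pcompArgs_pcompArgs_inside (α : A → A) {n p : ℕ} (hp : 1 ≤ p) (G H : (ℕ → A) → A)
    {i r : ℕ} (hr : r < n) (a : ℕ → A) :
    pcompArgs α n G i (pcompArgs α p H (i + r) a)
      = pcompArgs α (n + p - 1) (fun x => G (pcompArgs α p H r x)) i a := by
  funext t
  simp only [pcompArgs]
  split_ifs <;>
    first | omega | exact iterate_iterate_apply_of_add_eq α a (by omega) (by omega) | skip
  subst_vars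
  congr 1; funext k
  simp only [pcompArgs]
  split_ifs <;> first | omega | rfl | (congr 1; funext l; congr 1; omega) | (congr 2; omega)

lemma pcompArgs_pcompArgs_left (α : A → A) {n p : ℕ} (hn : 1 ≤ n) (hp : 1 ≤ p)
    {G : (ℕ → A) → A} (hG : ∀ x, α (G x) = G fun t => α (x t)) (H : (ℕ → A) → A)
    {u v : ℕ} (huv : u < v) (a : ℕ → A) :
    pcompArgs α n G v (pcompArgs α p H u a) = pcompArgs₂ α p n H G u v a := by
  funext t
  simp only [pcompArgs, pcompArgs₂]
  split_ifs <;>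
    first | omega | rfl | exact iterate_iterate_apply_of_add_eq α a (by omega) (by omega) | skip
  rw [iterate_map_of_equivariant hG]
  congr 1; funext k
  rw [if_neg (by omega), if_neg (by omega)]
  congr 2; omega

lemma pcompArgs_pcompArgs_right {K : Type*} [Field K] [AddCommGroup A] [Module K A]
    (α : A → A) {n p : ℕ} (hn : 1 ≤ n) (hp : 1 ≤ p) {g : MultilinearMap K (fun _ : Fin n => A) A}
    (hg : ∀ v : Fin n → A, α (g v) = g fun t => α (v t)) (H : (ℕ → A) → A)
    {u v : ℕ} (huv : u < v) (a : ℕ → A) :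
    pcompArgs α n (toCochain n g) u (pcompArgs α p H (v + (n - 1)) a)
      = pcompArgs₂ α n p (toCochain n g) H u v a := by
  funext t
  simp only [pcompArgs, pcompArgs₂, toCochain]
  split_ifs <;>
    first | omega | rfl | exact iterate_iterate_apply_of_add_eq α a (by omega) (by omega) | skip
  rw [iterate_map_of_equivariant hg]
  congr 1; funext j
  rw [if_pos (by omega)]

end PcompArgs

section Circ

variable {K A : Type*} [Field K] [AddCommGroup A] [Module K A]

lemma toCochain_pcompArgs {q : ℕ} (f : MultilinearMap K (fun _ : Fin q => A) A) (α : A → A)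
    (M : ℕ) (G G' : (ℕ → A) → A) {j : ℕ} (hj : j < q) (a : ℕ → A) :
    toCochain q f (pcompArgs α M G j a)
      = f.toLinearMap (fun s : Fin q => pcompArgs α M G' j a s) ⟨j, hj⟩ (G fun k => a (j + k)) := by
  rw [MultilinearMap.toLinearMap_apply, toCochain]
  congr 1
  funext s
  rcases eq_or_ne s ⟨j, hj⟩ with rfl | hs
  · simp [pcompArgs]
  · have hs' : (s : ℕ) ≠ j := fun h => hs (Fin.ext h)
    simp [pcompArgs, Function.update_of_ne hs, hs']

lemma circ_toCochain_sub_smul {q : ℕ} (f : MultilinearMap K (fun _ : Fin q => A) A) (α : A → A)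
    (M : ℕ) (G₁ G₂ : (ℕ → A) → A) (z : ℤ) (a : ℕ → A) :
    circ α q M (toCochain q f) (fun x => G₁ x - z • G₂ x) a
      = circ α q M (toCochain q f) G₁ a - z • circ α q M (toCochain q f) G₂ a := by
  simp only [circ_apply, smul_sum, ← sum_sub_distrib]
  refine sum_congr rfl fun j hj => ?_
  have hj : j < q := mem_range.mp hj
  rw [toCochain_pcompArgs f α M _ G₁ hj, toCochain_pcompArgs f α M G₁ G₁ hj,
    toCochain_pcompArgs f α M G₂ G₁ hj, map_sub, map_zsmul, smul_sub, smul_comm]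

lemma circ_sub_smul_left (α : A → A) (M q : ℕ) (F₁ F₂ H : (ℕ → A) → A) (z : ℤ) (a : ℕ → A) :
    circ α M q (fun x => F₁ x - z • F₂ x) H a = circ α M q F₁ H a - z • circ α M q F₂ H a := by
  simp only [circ_apply, smul_sum, ← sum_sub_distrib, smul_sub]
  exact sum_congr rfl fun j _ => by rw [smul_comm]

end Circ

section Associator

variable {K A : Type*} [Field K] [AddCommGroup A] [Module K A]

lemma circ_circ_apply (α : A → A) (m n p : ℕ) (F G H : (ℕ → A) → A) (a : ℕ → A) :
    circ α (m + n - 1) p (circ α m n F G) H a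
      = ∑ i ∈ range m, ∑ j ∈ range (m + n - 1),
          ((-1 : ℤ) ^ ((p - 1) * j + (n - 1) * i)) •
            F (pcompArgs α n G i (pcompArgs α p H j a)) := by
  simp only [circ_apply, smul_sum, smul_smul, ← pow_add]
  exact sum_comm

lemma circ_toCochain_circ_apply {m : ℕ} (f : MultilinearMap K (fun _ : Fin m => A) A) (α : A → A)
    (n p : ℕ) (G H : (ℕ → A) → A) (a : ℕ → A) :
    circ α m (n + p - 1) (toCochain m f) (circ α n p G H) a
      = ∑ i ∈ range m, ∑ r ∈ range n,
          ((-1 : ℤ) ^ ((n + p - 1 - 1) * i + (p - 1) * r)) •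
            toCochain m f (pcompArgs α (n + p - 1) (fun x => G (pcompArgs α p H r x)) i a) := by
  rw [circ_apply]
  refine sum_congr rfl fun i hi => ?_
  have hi : i < m := mem_range.mp hi
  simp only [toCochain_pcompArgs f α _ _ (circ α n p G H) hi, circ_apply, map_sum, map_zsmul,
    smul_sum, smul_smul, ← pow_add]

lemma sum_range_add_sub_one {M : Type*} [AddCommMonoid M] {i m n : ℕ} (hi : i < m) (hn : 1 ≤ n)
    (t : ℕ → M) :
    ∑ j ∈ range (m + n - 1), t j
      = ∑ j ∈ range i, t j + ∑ r ∈ range n, t (i + r) + ∑ v ∈ Ioo i m, t (v + (n - 1)) := by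
  rw [range_eq_Ico, ← sum_Ico_consecutive t (Nat.zero_le (i + n)) (by omega : i + n ≤ m + n - 1),
    ← sum_Ico_consecutive t (Nat.zero_le i) (by omega : i ≤ i + n), ← range_eq_Ico,
    sum_Ico_eq_sum_range, Nat.add_sub_cancel_left, ← Finset.Ico_add_one_left_eq_Ioo,
    sum_Ico_add', show i + 1 + (n - 1) = i + n by omega, show m + (n - 1) = m + n - 1 by omega]

def parallelComp (α : A → A) (m n p : ℕ) (F G H : (ℕ → A) → A) (a : ℕ → A) : A :=
  ∑ u ∈ range m, ∑ v ∈ Ioo u m,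
    (((-1 : ℤ) ^ ((p - 1) * (v + (n - 1)) + (n - 1) * u)) • F (pcompArgs₂ α n p G H u v a)
      + ((-1 : ℤ) ^ ((p - 1) * u + (n - 1) * v)) • F (pcompArgs₂ α p n H G u v a))

lemma circ_circ_sub_circ_circ_eq_parallelComp (α : A → A) {m n p : ℕ} (hn : 1 ≤ n) (hp : 1 ≤ p)
    (f : MultilinearMap K (fun _ : Fin m => A) A) (g : MultilinearMap K (fun _ : Fin n => A) A)
    (hg : ∀ v : Fin n → A, α (g v) = g fun t => α (v t)) (H : (ℕ → A) → A) (a : ℕ → A) :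
    circ α (m + n - 1) p (circ α m n (toCochain m f) (toCochain n g)) H a
      - circ α m (n + p - 1) (toCochain m f) (circ α n p (toCochain n g) H) a
    = parallelComp α m n p (toCochain m f) (toCochain n g) H a := by
  set F := toCochain m f
  set G := toCochain n g
  rw [circ_circ_apply, circ_toCochain_circ_apply, ← sum_sub_distrib]
  have split : ∀ i ∈ range m,
      ∑ j ∈ range (m + n - 1),
          ((-1 : ℤ) ^ ((p - 1) * j + (n - 1) * i)) • F (pcompArgs α n G i (pcompArgs α p H j a))
        - ∑ r ∈ range n, ((-1 : ℤ) ^ ((n + p - 1 - 1) * i + (p - 1) * r)) •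
            F (pcompArgs α (n + p - 1) (fun x => G (pcompArgs α p H r x)) i a)
      = ∑ u ∈ range i, ((-1 : ℤ) ^ ((p - 1) * u + (n - 1) * i)) • F (pcompArgs₂ α p n H G u i a)
        + ∑ v ∈ Ioo i m,
            ((-1 : ℤ) ^ ((p - 1) * (v + (n - 1)) + (n - 1) * i)) •
              F (pcompArgs₂ α n p G H i v a) := by
    intro i hi
    rw [sum_range_add_sub_one (mem_range.mp hi) hn]
    have inside : ∀ r ∈ range n,
        ((-1 : ℤ) ^ ((p - 1) * (i + r) + (n - 1) * i)) •
            F (pcompArgs α n G i (pcompArgs α p H (i + r) a))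
          = ((-1 : ℤ) ^ ((n + p - 1 - 1) * i + (p - 1) * r)) •
            F (pcompArgs α (n + p - 1) (fun x => G (pcompArgs α p H r x)) i a) := by
      intro r hr
      rw [pcompArgs_pcompArgs_inside α hp G H (mem_range.mp hr),
        show n + p - 1 - 1 = n - 1 + (p - 1) by omega]
      ring_nf
    rw [sum_congr rfl inside, add_sub_right_comm, add_sub_cancel_right]
    congr 1 <;> refine sum_congr rfl fun u hu => ?_
    · rw [pcompArgs_pcompArgs_left α hn hp (fun x => hg _) H (mem_range.mp hu) a]
    · rw [pcompArgs_pcompArgs_right α hn hp hg H (mem_Ioo.mp hu).1 a]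
  rw [sum_congr rfl split, sum_add_distrib, sum_comm' (t' := range m) (s' := fun v => Ioo v m)]
  · simp only [parallelComp, sum_add_distrib, add_comm]
  · intro u v
    simp only [mem_range, mem_Ioo]
    omega

lemma parallelComp_comm (α : A → A) (m n p : ℕ) (F G H : (ℕ → A) → A) (a : ℕ → A) :
    parallelComp α m n p F G H a
      = ((-1 : ℤ) ^ ((n - 1) * (p - 1))) • parallelComp α m p n F H G a := by
  simp only [parallelComp, smul_sum, smul_add, smul_smul, ← pow_add]
  refine sum_congr rfl fun u _ => sum_congr rfl fun v _ => ?_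
  rw [add_comm]
  congr 2
  · exact neg_one_pow_congr (by simp [Nat.even_add, Nat.even_mul]; tauto)
  · ring

end Associator

section Bracket

variable {K A : Type*} [Field K] [AddCommGroup A] [Module K A]

lemma circ_associator_symm (α : A → A) {m n p : ℕ} (hn : 1 ≤ n) (hp : 1 ≤ p)
    (f : MultilinearMap K (fun _ : Fin m => A) A) (g : MultilinearMap K (fun _ : Fin n => A) A)
    (hg : ∀ v : Fin n → A, α (g v) = g fun t => α (v t))
    (h : MultilinearMap K (fun _ : Fin p => A) A)
    (hh : ∀ v : Fin p → A, α (h v) = h fun t => α (v t)) (a : ℕ → A) :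
    circ α (m + n - 1) p (circ α m n (toCochain m f) (toCochain n g)) (toCochain p h) a
      - circ α m (n + p - 1) (toCochain m f) (circ α n p (toCochain n g) (toCochain p h)) a
    = ((-1 : ℤ) ^ ((n - 1) * (p - 1))) •
        (circ α (m + p - 1) n (circ α m p (toCochain m f) (toCochain p h)) (toCochain n g) a
          - circ α m (n + p - 1) (toCochain m f)
              (circ α p n (toCochain p h) (toCochain n g)) a) := by
  rw [circ_circ_sub_circ_circ_eq_parallelComp α hn hp f g hg, add_comm n p,
    circ_circ_sub_circ_circ_eq_parallelComp α hp hn f h hh, parallelComp_comm]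

lemma brkt_antisymm (α : A → A) (m n : ℕ) (F G : (ℕ → A) → A) (a : ℕ → A) :
    brkt α m n F G a = -(((-1 : ℤ) ^ ((m - 1) * (n - 1))) • brkt α n m G F a) := by
  have hsq : ((-1 : ℤ) ^ ((m - 1) * (n - 1))) * (-1) ^ ((n - 1) * (m - 1)) = 1 := by
    rw [mul_comm (n - 1), ← pow_add, ← two_mul, pow_mul, neg_one_sq, one_pow]
  rw [brkt, brkt, smul_sub, smul_smul, hsq, one_smul, neg_sub]

lemma brkt_jacobi (α : A → A) {m n p : ℕ} (hm : 1 ≤ m) (hn : 1 ≤ n) (hp : 1 ≤ p)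
    (f : MultilinearMap K (fun _ : Fin m => A) A) (g : MultilinearMap K (fun _ : Fin n => A) A)
    (h : MultilinearMap K (fun _ : Fin p => A) A)
    (hf : ∀ v : Fin m → A, α (f v) = f fun t => α (v t))
    (hg : ∀ v : Fin n → A, α (g v) = g fun t => α (v t))
    (hh : ∀ v : Fin p → A, α (h v) = h fun t => α (v t)) (a : ℕ → A) :
    brkt α m (n + p - 1) (toCochain m f) (brkt α n p (toCochain n g) (toCochain p h)) a
      = brkt α (m + n - 1) p (brkt α m n (toCochain m f) (toCochain n g)) (toCochain p h) a
        + ((-1 : ℤ) ^ ((m - 1) * (n - 1))) •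
            brkt α n (m + p - 1) (toCochain n g)
              (brkt α m p (toCochain m f) (toCochain p h)) a := by
  have A₁ := circ_associator_symm α hn hp f g hg h hh a
  have A₂ := circ_associator_symm α hm hp g f hf h hh a
  have A₃ := circ_associator_symm α hm hn h f hf g hg a
  rw [add_comm n m] at A₂
  rw [add_comm p m, add_comm p n] at A₃
  have hsum : ∀ {k l : ℕ}, 1 ≤ k → 1 ≤ l → k + l - 1 - 1 = (k - 1) + (l - 1) := by omega
  unfold brkt
  simp only [circ_toCochain_sub_smul, circ_sub_smul_left, hsum hn hp, hsum hm hn, hsum hm hp]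
  set x := ((-1 : ℤ) ^ ((m - 1) * (n - 1)))
  set y := ((-1 : ℤ) ^ ((m - 1) * (p - 1)))
  set z := ((-1 : ℤ) ^ ((n - 1) * (p - 1)))
  set F := toCochain m f
  set G := toCochain n g
  set H := toCochain p h
  have hx : x * x = 1 := by rw [← pow_add, ← two_mul, pow_mul, neg_one_sq, one_pow]
  -- The sign of `[g, [f, h]]` contains a factor `x`, so `x • [g, [f, h]]` carries `x * x`,
  -- which ring normalisation does not reduce to `1`.
  linear_combination (norm := module) -A₁ + x • A₂ - (y * z) • A₃
    + z • hx • circ α (m + p - 1) n (circ α m p F H) G a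
    - (y * z) • hx • circ α (m + p - 1) n (circ α p m H F) G a

end Bracket

/-- The bracket `[f,g] = f ∘ g - (-1)^{(m-1)(n-1)} g ∘ f` on
`C^•_α(A,A)`, built from the `α`-twisted circle product, is a degree `-1` graded Lie
bracket: it is graded antisymmetric, `[f,g] = -(-1)^{(m-1)(n-1)} [g,f]`, and satisfies
the graded Jacobi identity
`[f,[g,h]] = [[f,g],h] + (-1)^{(m-1)(n-1)} [g,[f,h]]`. -/
theorem brkt_graded_lie {K A : Type*} [Field K] [AddCommGroup A] [Module K A]
    (α : A →ₗ[K] A) (m n p : ℕ) (hm : 1 ≤ m) (hn : 1 ≤ n) (hp : 1 ≤ p)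
    (f : MultilinearMap K (fun _ : Fin m => A) A)
    (g : MultilinearMap K (fun _ : Fin n => A) A)
    (h : MultilinearMap K (fun _ : Fin p => A) A)
    (hf : ∀ a : Fin m → A, α (f a) = f fun t => α (a t))
    (hg : ∀ a : Fin n → A, α (g a) = g fun t => α (a t))
    (hh : ∀ a : Fin p → A, α (h a) = h fun t => α (a t)) :
    (∀ a : ℕ → A,
      brkt (⇑α) m n (toCochain m f) (toCochain n g) a
        = -(((-1 : ℤ) ^ ((m - 1) * (n - 1))) • brkt (⇑α) n m (toCochain n g) (toCochain m f) a)) ∧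
    (∀ a : ℕ → A,
      brkt (⇑α) m (n + p - 1) (toCochain m f)
          (brkt (⇑α) n p (toCochain n g) (toCochain p h)) a
        = brkt (⇑α) (m + n - 1) p (brkt (⇑α) m n (toCochain m f) (toCochain n g))
            (toCochain p h) a
          + ((-1 : ℤ) ^ ((m - 1) * (n - 1))) •
              brkt (⇑α) n (m + p - 1) (toCochain n g)
                (brkt (⇑α) m p (toCochain m f) (toCochain p h)) a) :=
  ⟨fun a => brkt_antisymm α m n _ _ a, fun a => brkt_jacobi α hm hn hp f g h hf hg hh a⟩
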